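/- arXiv:2305.10721 — 2 statements merged into one kernel-verified Lean document; each statement's English description precedes it below -/
import Mathlib

section
/- Let x(t) = s(t) + f(t) for t ∈ ℤ, where s is periodic with period p ≥ 1 and f : ℤ → ℝ is K-Lipschitz (|f(t) - f(t')| ≤ K·|t - t'| for all t, t'). Set the input horizon n = p + τ with τ ≥ 0, and define the predictor x̂(n + j) = x(n - p + (j mod p)) for j = 1, ..., m. Then the forecasting error satisfies |x(n + j) - x̂(n + j)| ≤ K·(p + j) for all j = 1, ..., m. -/
/-- Theorem 2: error bound of the copy-last-period predictor with Lipschitz trend. -/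
theorem lipschitz_trend_error_bound
    (x s f : ℤ → ℝ) (K : ℝ) (p τ n m : ℤ)
    (hp : 1 ≤ p) (hτ : 0 ≤ τ) (hn : n = p + τ)
    (hx : ∀ t : ℤ, x t = s t + f t)
    (hper : ∀ t : ℤ, s t = s (t - p))
    (hlip : ∀ t t' : ℤ, |f t - f t'| ≤ K * |(t : ℝ) - (t' : ℝ)|) :
    ∀ j : ℤ, 1 ≤ j → j ≤ m →
      |x (n + j) - x (n - p + (j % p))| ≤ K * ((p : ℝ) + (j : ℝ)) := by
  intro j hj1 hjm
  -- periodicity for multiples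
  have key : ∀ k : ℕ, ∀ t : ℤ, s t = s (t - (k : ℤ) * p) := by
    intro k
    induction k with
    | zero => intro t; simp
    | succ k ih =>
      intro t
      rw [ih t, hper (t - (k : ℤ) * p)]
      congr 1
      push_cast
      ring
  have hK : 0 ≤ K := by
    have h := hlip 1 0
    have h2 : (0:ℝ) ≤ |f 1 - f 0| := abs_nonneg _
    simp at h
    linarith
  set q := j / p with hq
  have hq0 : 0 ≤ q := Int.ediv_nonneg (by linarith) (by linarith)
  have hdiv : p * q + j % p = j := Int.mul_ediv_add_emod j p
  have hmod0 : 0 ≤ j % p := Int.emod_nonneg j (by omega)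
  -- seasonal cancellation
  have hs : s (n + j) = s (n - p + j % p) := by
    have := key (q + 1).toNat (n + j)
    rw [this]
    congr 1
    have : ((q + 1).toNat : ℤ) = q + 1 := Int.toNat_of_nonneg (by omega)
    rw [this]
    have hpq : p * q + j % p = j := hdiv
    ring_nf
    linarith
  have hsplit : x (n + j) - x (n - p + j % p) = f (n + j) - f (n - p + j % p) := by
    rw [hx, hx, hs]; ring
  rw [hsplit]
  calc |f (n + j) - f (n - p + j % p)|
      ≤ K * |((n + j : ℤ) : ℝ) - ((n - p + j % p : ℤ) : ℝ)| := hlip _ _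
    _ ≤ K * ((p : ℝ) + (j : ℝ)) := by
        apply mul_le_mul_of_nonneg_left _ hK
        have habs : ((n + j : ℤ) : ℝ) - ((n - p + j % p : ℤ) : ℝ)
            = ((p + j - j % p : ℤ) : ℝ) := by push_cast; ring
        rw [habs]
        have hpq : 0 ≤ p * q := mul_nonneg (by linarith) hq0
        rw [abs_of_nonneg (by exact_mod_cast (by linarith : (0:ℤ) ≤ p + j - j % p))]
        have : ((p + j - j % p : ℤ) : ℝ) ≤ ((p + j : ℤ) : ℝ) := by
          exact_mod_cast (by linarith : p + j - j % p ≤ p + j)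
        push_cast at this ⊢
        linarith
end

section
/- If the moving-average window size q is not a multiple of the period p (and p does not divide q), then there exists a p-periodic sequence s : ℤ → ℝ such that the moving average M(t) = (1/q)∑_{i=0}^{q-1} s(t-i) is not constant in t. -/
/-- If the moving-average window size q is not a multiple of the period p, the
    moving average of some p-periodic sequence is not constant. -/
theorem moving_average_mismatched_window
    (p q : ℕ) (hp : 0 < p) (hq : 0 < q) (hndvd : ¬ p ∣ q) :
    ∃ s : ℤ → ℝ, (∀ t : ℤ, s t = s (t - (p : ℤ))) ∧
      ∃ t t' : ℤ,
        (1 / (q : ℝ)) * ∑ i ∈ Finset.range q, s (t - i)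
          ≠ (1 / (q : ℝ)) * ∑ i ∈ Finset.range q, s (t' - i) := by
  set s : ℤ → ℝ := fun t => if (p : ℤ) ∣ t then 1 else 0 with hs
  refine ⟨s, ?_, 0, -1, ?_⟩
  · intro t
    simp only [hs]
    have : (p : ℤ) ∣ t ↔ (p : ℤ) ∣ t - p := by
      constructor
      · intro h; exact dvd_sub h dvd_rfl
      · intro h; have := dvd_add h (dvd_refl (p : ℤ)); simpa using this
    exact if_congr this rfl rfl
  · have hf : ∀ i : ℕ, s (-1 - (i : ℤ)) = s (0 - ((i + 1 : ℕ) : ℤ)) := by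
      intro i; congr 1; push_cast; ring
    have key : ∑ i ∈ Finset.range q, s (-1 - (i : ℤ))
        = ∑ i ∈ Finset.range q, s (0 - (i : ℤ)) + s (0 - (q : ℤ)) - s (0 - (0 : ℕ)) := by
      have h1 : ∑ i ∈ Finset.range (q + 1), s (0 - (i : ℤ))
          = (∑ i ∈ Finset.range q, s (0 - ((i + 1 : ℕ) : ℤ))) + s (0 - ((0 : ℕ) : ℤ)) :=
        Finset.sum_range_succ' (fun i => s (0 - (i : ℤ))) q
      have h2 : ∑ i ∈ Finset.range (q + 1), s (0 - (i : ℤ))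
          = ∑ i ∈ Finset.range q, s (0 - (i : ℤ)) + s (0 - (q : ℤ)) :=
        Finset.sum_range_succ _ q
      calc ∑ i ∈ Finset.range q, s (-1 - (i : ℤ))
          = ∑ i ∈ Finset.range q, s (0 - ((i + 1 : ℕ) : ℤ)) := by
            exact Finset.sum_congr rfl (fun i _ => hf i)
        _ = ∑ i ∈ Finset.range (q + 1), s (0 - (i : ℤ)) - s (0 - ((0 : ℕ) : ℤ)) := by
            rw [h1]; ring
        _ = ∑ i ∈ Finset.range q, s (0 - (i : ℤ)) + s (0 - (q : ℤ)) - s (0 - (0 : ℕ)) := by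
            rw [h2]
    have h0 : s (0 - ((0 : ℕ) : ℤ)) = 1 := by simp [hs]
    have hq' : s (0 - (q : ℤ)) = 0 := by
      have hA : ¬ (p : ℤ) ∣ (q : ℤ) := fun h => hndvd (Int.ofNat_dvd.mp h)
      have hB : ¬ (p : ℤ) ∣ (0 - (q : ℤ)) := by simpa using hA
      simp [hs, hA]
    have hqne : (1 / (q : ℝ)) ≠ 0 := by
      have : (q : ℝ) ≠ 0 := Nat.cast_ne_zero.mpr hq.ne'
      simp [this]
    intro h
    have := mul_left_cancel₀ hqne h
    rw [key, h0, hq'] at this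
    linarith
end
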